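/- For every τ ∈ ℝ the d'Alembert operators satisfy the identity C(τ+1) + C(τ−1) = 2·C(1)·C(τ) as bounded operators on L²(X¹,m¹). -/

import Mathlib

open MeasureTheory Set ENNReal

set_option linter.unusedSectionVars false

noncomputable section

/-- A weighted network: countable connected graph without loops or multiple edges,
equipped with positive conductances `c` satisfying `m⁰(x) = ∑_{y∼x} c(xy) < ∞`. -/
structure Network (V : Type) : Type where
  adj : V → V → Prop
  adj_symm : ∀ x y, adj x y → adj y x
  adj_irrefl : ∀ x, ¬ adj x x
  adj_connected : ∀ x y, Relation.ReflTransGen adj x y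
  c : V → V → ℝ
  c_symm : ∀ x y, c x y = c y x
  c_pos : ∀ x y, adj x y → 0 < c x y
  c_eq_zero : ∀ x y, ¬ adj x y → c x y = 0
  c_summable : ∀ x, Summable fun y => c x y

namespace Network

variable {V : Type} [Countable V] [MeasurableSpace V] [DiscreteMeasurableSpace V]

/-- The vertex weight `m⁰(x) = ∑_{y : y ∼ x} c(xy)`. -/
def m0 (N : Network V) (x : V) : ℝ := ∑' y, N.c x y

/-- The measure `m¹` on the metric graph `X¹`.  A point `((x,y),t)` represents the point
at distance `t ∈ (0,1)` from `x` on the edge `[x,y]`; each edge appears with both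
orientations, whence the factor `1/2`. -/
def edgeMeasure (N : Network V) : Measure ((V × V) × ℝ) :=
  Measure.sum fun e : V × V =>
    Measure.map (fun t => (e, t))
      ((ENNReal.ofReal (N.c e.1 e.2 / 2)) • (volume.restrict (Set.Ioo (0:ℝ) 1)))

/-- The identification `(xy,t) ≡ (yx,1-t)` of the two orientations of an edge. -/
def eFlip : (V × V) × ℝ → (V × V) × ℝ := fun p => ((p.1.2, p.1.1), 1 - p.2)

theorem measurable_eFlip : Measurable (eFlip (V := V)) := by
  apply Measurable.prod
  · exact ((measurable_snd.comp measurable_fst).prodMk (measurable_fst.comp measurable_fst))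
  · exact measurable_const.sub measurable_snd

theorem measurePreserving_eFlip (N : Network V) :
    MeasurePreserving (eFlip (V := V)) N.edgeMeasure N.edgeMeasure := by
  refine ⟨measurable_eFlip, ?_⟩
  ext s hs
  rw [Measure.map_apply measurable_eFlip hs, edgeMeasure,
    Measure.sum_apply _ (measurable_eFlip hs), Measure.sum_apply _ hs]
  have key : ∀ e : V × V,
      (Measure.map (fun t => (e, t))
        ((ENNReal.ofReal (N.c e.1 e.2 / 2)) • (volume.restrict (Set.Ioo (0:ℝ) 1))))
          (eFlip ⁻¹' s)
      = (Measure.map (fun t => ((e.2, e.1), t))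
        ((ENNReal.ofReal (N.c e.2 e.1 / 2)) • (volume.restrict (Set.Ioo (0:ℝ) 1)))) s := by
    intro e
    have hme : Measurable fun t : ℝ => (e, t) := measurable_prodMk_left
    have hme' : Measurable fun t : ℝ => ((e.2, e.1), t) := measurable_prodMk_left
    rw [Measure.map_apply hme (measurable_eFlip hs), Measure.map_apply hme' hs,
      Measure.smul_apply, Measure.smul_apply, N.c_symm e.1 e.2]
    congr 1
    have hpre : ((fun t : ℝ => (e, t)) ⁻¹' (eFlip ⁻¹' s))
        = (fun t : ℝ => 1 - t) ⁻¹' ((fun t : ℝ => ((e.2, e.1), t)) ⁻¹' s) := by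
      ext t; simp [eFlip]
    rw [hpre]
    have hmp : MeasurePreserving (fun t : ℝ => 1 - t)
        (volume.restrict (Set.Ioo (0:ℝ) 1)) (volume.restrict (Set.Ioo (0:ℝ) 1)) := by
      have h0 : MeasurePreserving (fun t : ℝ => 1 - t) volume volume :=
        Measure.measurePreserving_sub_left volume 1
      have h1 := h0.restrict_preimage (s := Set.Ioo (0:ℝ) 1) measurableSet_Ioo
      have h2 : (fun t : ℝ => 1 - t) ⁻¹' (Set.Ioo (0:ℝ) 1) = Set.Ioo (0:ℝ) 1 := by
        ext t; constructor <;> (intro ht; simp only [Set.mem_preimage, Set.mem_Ioo] at *; constructor <;> linarith [ht.1, ht.2])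
      rwa [h2] at h1
    exact (hmp.measure_preimage ((hme' hs).nullMeasurableSet)).symm ▸ rfl
  calc
    (∑' e : V × V,
        (Measure.map (fun t => (e, t))
          ((ENNReal.ofReal (N.c e.1 e.2 / 2)) • (volume.restrict (Set.Ioo (0:ℝ) 1))))
            (eFlip ⁻¹' s))
        = ∑' e : V × V,
          (Measure.map (fun t => ((e.2, e.1), t))
            ((ENNReal.ofReal (N.c e.2 e.1 / 2)) • (volume.restrict (Set.Ioo (0:ℝ) 1)))) s :=
      tsum_congr key
    _ = ∑' e : V × V,
          (Measure.map (fun t => (e, t))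
            ((ENNReal.ofReal (N.c e.1 e.2 / 2)) • (volume.restrict (Set.Ioo (0:ℝ) 1)))) s :=
      (Equiv.prodComm V V).tsum_eq fun e =>
        (Measure.map (fun t => (e, t))
          ((ENNReal.ofReal (N.c e.1 e.2 / 2)) • (volume.restrict (Set.Ioo (0:ℝ) 1)))) s

/-- The continuous linear map `F ↦ F ∘ σ` induced by the edge-orientation flip. -/
def flipOp (N : Network V) : Lp ℂ 2 N.edgeMeasure →L[ℂ] Lp ℂ 2 N.edgeMeasure :=
  (Lp.compMeasurePreservingₗᵢ (E := ℂ) (p := 2) ℂ (eFlip (V := V))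
    N.measurePreserving_eFlip).toContinuousLinearMap

/-- The Hilbert space `L²(X¹, m¹)` of square-integrable functions on the metric graph,
realized as the subspace of `L²` functions on oriented edges which are compatible with
the identification `(xy,t) ≡ (yx, 1-t)`. -/
def L2X (N : Network V) : Submodule ℂ (Lp ℂ 2 N.edgeMeasure) :=
  LinearMap.ker ((N.flipOp - ContinuousLinearMap.id ℂ (Lp ℂ 2 N.edgeMeasure) :
    Lp ℂ 2 N.edgeMeasure →L[ℂ] Lp ℂ 2 N.edgeMeasure) : Lp ℂ 2 N.edgeMeasure →ₗ[ℂ] Lp ℂ 2 N.edgeMeasure)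

theorem isClosed_L2X (N : Network V) : IsClosed (N.L2X : Set (Lp ℂ 2 N.edgeMeasure)) :=
  ContinuousLinearMap.isClosed_ker (N.flipOp - ContinuousLinearMap.id ℂ (Lp ℂ 2 N.edgeMeasure))

instance (N : Network V) : CompleteSpace N.L2X :=
  (isClosed_L2X N).completeSpace_coe

end Network

namespace Network

variable {V : Type} [Countable V] [MeasurableSpace V] [DiscreteMeasurableSpace V]

/-- The value of (a representative of) `F ∈ L²(X¹,m¹)` at the point of the edge `[x,y]`
at distance `t` from `x`. -/
def edgeFun (N : Network V) (F : Lp ℂ 2 N.edgeMeasure) (x y : V) (t : ℝ) : ℂ :=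
  F ((x, y), t)

/-- The counting measure on vertices weighted by `m⁰`; `ℓ²(X⁰,m⁰) = Lp ℂ 2 N.vertexMeasure`. -/
def vertexMeasure (N : Network V) : Measure V :=
  Measure.sum fun x => (ENNReal.ofReal (N.m0 x)) • Measure.dirac x

/-- The averaging operator, at the level of functions. -/
def avgFun (N : Network V) (f : V → V → ℝ → ℂ) (x y : V) (t : ℝ) : ℂ :=
  (N.m0 x : ℂ)⁻¹ * (∑' u, (N.c x u : ℂ) * (∫ s in (0:ℝ)..(1 - t), f x u s))
    + (N.m0 y : ℂ)⁻¹ * (∑' v, (N.c y v : ℂ) * (∫ s in (0:ℝ)..t, f y v s))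

/-- `f, g, h` are (continuous versions of) an element of `Ĥ²(X¹,m¹)` together with its first
and second edgewise derivatives: on each edge, `g` is the derivative of `f` and `h` the
derivative of `g` (in the sense of absolutely continuous functions, via the fundamental
theorem of calculus), and `f`, `g`, `h` are square-integrable on the metric graph. -/
structure IsH2Rep (N : Network V) (f g h : V → V → ℝ → ℂ) : Prop where
  ftc₁ : ∀ x y, N.adj x y → ∀ t ∈ Set.Icc (0:ℝ) 1,
    f x y t = f x y 0 + ∫ s in (0:ℝ)..t, g x y s
  ftc₂ : ∀ x y, N.adj x y → ∀ t ∈ Set.Icc (0:ℝ) 1,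
    g x y t = g x y 0 + ∫ s in (0:ℝ)..t, h x y s
  intervalIntegrable_g : ∀ x y, N.adj x y → IntervalIntegrable (g x y) volume 0 1
  intervalIntegrable_h : ∀ x y, N.adj x y → IntervalIntegrable (h x y) volume 0 1
  memL2_f : MemLp (fun p : (V × V) × ℝ => f p.1.1 p.1.2 p.2) 2 N.edgeMeasure
  memL2_g : MemLp (fun p : (V × V) × ℝ => g p.1.1 p.1.2 p.2) 2 N.edgeMeasure
  memL2_h : MemLp (fun p : (V × V) × ℝ => h p.1.1 p.1.2 p.2) 2 N.edgeMeasure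

/-- The graph of the operator `S = -d²/dt²` with domain the functions in `Ĥ²(X¹,m¹)` which are
continuous at the vertices: `(F, G) ∈ graph S` iff `F` has an edgewise `H²` representative
`f` (with derivatives `g`, `h`), `f` is continuous at each vertex, and `G = -f''`. -/
def SGraph (N : Network V) (F G : N.L2X) : Prop :=
  ∃ f g h : V → V → ℝ → ℂ, N.IsH2Rep f g h ∧
    (⇑(F : Lp ℂ 2 N.edgeMeasure) =ᵐ[N.edgeMeasure] fun p => f p.1.1 p.1.2 p.2) ∧
    (∀ x u v, N.adj x u → N.adj x v → f x u 0 = f x v 0) ∧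
    (⇑(G : Lp ℂ 2 N.edgeMeasure) =ᵐ[N.edgeMeasure] fun p => -(h p.1.1 p.1.2 p.2))

/-- The graph of the (Kirchhoff) Laplacian `L`: the restriction of `S` to the functions
satisfying moreover `F'(x) = ∑_{y∼x} c(xy) F'(xy,0+) = 0` at every vertex `x`. -/
def LGraph (N : Network V) (F G : N.L2X) : Prop :=
  ∃ f g h : V → V → ℝ → ℂ, N.IsH2Rep f g h ∧
    (⇑(F : Lp ℂ 2 N.edgeMeasure) =ᵐ[N.edgeMeasure] fun p => f p.1.1 p.1.2 p.2) ∧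
    (∀ x u v, N.adj x u → N.adj x v → f x u 0 = f x v 0) ∧
    (∀ x, Summable fun y => (N.c x y : ℂ) * g x y 0) ∧
    (∀ x, ∑' y, (N.c x y : ℂ) * g x y 0 = 0) ∧
    (⇑(G : Lp ℂ 2 N.edgeMeasure) =ᵐ[N.edgeMeasure] fun p => -(h p.1.1 p.1.2 p.2))

end Network

/-- The graph of the adjoint of a densely defined operator, described by its graph `T`:
`(G,K) ∈ graph T*` iff `⟪G, SF⟫ = ⟪K, F⟫` for all `(F, SF) ∈ T`. -/
def adjointGraph {H : Type*} [NormedAddCommGroup H] [InnerProductSpace ℂ H]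
    (T : Set (H × H)) : Set (H × H) :=
  {q | ∀ p ∈ T, (inner ℂ q.1 p.2 : ℂ) = inner ℂ q.2 p.1}

/-- A densely defined operator given by its graph `T` is self-adjoint if `T* = T`. -/
def IsSelfAdjointGraph {H : Type*} [NormedAddCommGroup H] [InnerProductSpace ℂ H]
    (T : Set (H × H)) : Prop :=
  Dense (Prod.fst '' T) ∧ adjointGraph T = T

/-- The entire function `Φ(z,t) = t` for `z = 0` and `sin(zt)/z` otherwise. -/
def Phi (z : ℂ) (t : ℝ) : ℂ := if z = 0 then (t : ℂ) else Complex.sin (z * t) / z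

namespace Network

variable {V : Type} [Countable V] [MeasurableSpace V] [DiscreteMeasurableSpace V]

/-- Iterated forward extension step for the d'Alembert extension: `fwdExt f n x y s`
represents `F̃(xy, s + n)` for `s ∈ (0,1]`. -/
def fwdExt (N : Network V) (f : V → V → ℝ → ℂ) : ℕ → V → V → ℝ → ℂ
  | 0 => f
  | (n+1) => fun x y s =>
      (2 / (N.m0 y) : ℂ) * ∑' v, (N.c y v : ℂ) * N.fwdExt f n y v s - N.fwdExt f n y x s

/-- Iterated backward extension step for the d'Alembert extension: `bwdExt f n x y s`
represents `F̃(xy, s - n)` for `s ∈ [0,1)`. -/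
def bwdExt (N : Network V) (f : V → V → ℝ → ℂ) : ℕ → V → V → ℝ → ℂ
  | 0 => f
  | (n+1) => fun x y s =>
      (2 / (N.m0 x) : ℂ) * ∑' u, (N.c x u : ℂ) * N.bwdExt f n u x s - N.bwdExt f n y x s

/-- The d'Alembert extension `F̃` of a function `F` on the metric graph: each edge component
`t ↦ F(xy,t)`, `t ∈ [0,1]`, is extended to the whole real line by the recursion
`F̃(xy,t) = (2/m⁰(y)) ∑_{v∼y} c(yv) F̃(yv,t-1) - F̃(yx,t-1)` for `t > 1` and
`F̃(xy,t) = (2/m⁰(x)) ∑_{u∼x} c(ux) F̃(ux,t+1) - F̃(yx,t+1)` for `t < 0`. -/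
def tilde (N : Network V) (f : V → V → ℝ → ℂ) (x y : V) (t : ℝ) : ℂ :=
  if 0 ≤ t ∧ t ≤ 1 then f x y t
  else if 1 < t then N.fwdExt f (⌈t⌉ - 1).toNat x y (t - ((⌈t⌉ - 1 : ℤ) : ℝ))
  else N.bwdExt f (-⌊t⌋).toNat x y (t + ((-⌊t⌋ : ℤ) : ℝ))

/-- The d'Alembert operator `C(τ)` at the level of functions. -/
def dAlembertFun (N : Network V) (f : V → V → ℝ → ℂ) (τ : ℝ) (x y : V) (t : ℝ) : ℂ :=
  (N.tilde f x y (t + τ) + N.tilde f x y (t - τ)) / 2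

/-- The squared norm `‖g‖²_{L²(X¹,m¹)} = (1/2) ∑_x ∑_{y} c(xy) ∫₀¹ |g(xy,t)|² dt`
(with values in `ℝ≥0∞`). -/
def normSq (N : Network V) (g : V → V → ℝ → ℂ) : ℝ≥0∞ :=
  (1/2 : ℝ≥0∞) * ∑' x, ∑' y, ENNReal.ofReal (N.c x y) *
    ∫⁻ t in Set.Ioo (0:ℝ) 1, ((‖g x y t‖₊ : ℝ≥0∞) ^ 2)

end Network

/-!
Off the integers, the slice `F̃(·, u)` is the `⌊u⌋`-th power of the step map
`G ↦ (xy ↦ 2·(mean of G(y·) around y) − G(yx))` applied to `F(·, fract u)`; the step map is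
invertible, its inverse being the backward recursion, so `F̃(·, u ± 1)` is the step map, resp. its
inverse, applied to `F̃(·, u)`. As `C(τ)F` at time `t` is the average of `F̃(·, t + τ)` and
`F̃(·, t - τ)`, the functional equation at `(xy, t)` is then the additivity of both maps.
Additivity needs the conductance-weighted sums to converge: it holds for edge functions of finite
weighted `ℓ²` norm, a class the step maps preserve by Cauchy–Schwarz, and for `F ∈ L²` Tonelli
puts almost every slice `F(·, s)` in this class.
-/

lemma Complex.enorm_ofReal_of_nonneg {r : ℝ} (hr : 0 ≤ r) : ‖(r : ℂ)‖ₑ = ENNReal.ofReal r := by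
  rw [← ofReal_norm, Complex.norm_real, Real.norm_of_nonneg hr]

lemma ENNReal.sq_tsum_mul_le {ι : Type*} (w a : ι → ℝ≥0∞) :
    (∑' i, w i * a i) ^ 2 ≤ (∑' i, w i) * ∑' i, w i * a i ^ 2 := by
  let _ : MeasurableSpace ι := ⊤
  have hsqrt : ∀ x : ℝ≥0∞, (x ^ (2⁻¹ : ℝ)) ^ 2 = x := by
    simpa using ENNReal.rpow_inv_natCast_pow (n := 2) two_ne_zero
  have hH := ENNReal.lintegral_mul_le_Lp_mul_Lq Measure.count Real.HolderConjugate.two_two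
    (f := fun i => w i ^ (2⁻¹ : ℝ)) (g := fun i => w i ^ (2⁻¹ : ℝ) * a i)
    measurable_from_top.aemeasurable measurable_from_top.aemeasurable
  simp only [lintegral_count, Pi.mul_apply, ← mul_assoc, ← sq, hsqrt, ENNReal.rpow_two,
    mul_pow] at hH
  calc (∑' i, w i * a i) ^ 2
      ≤ ((∑' i, w i) ^ (1 / 2 : ℝ) * (∑' i, w i * a i ^ 2) ^ (1 / 2 : ℝ)) ^ 2 := by gcongr
    _ = (∑' i, w i) * ∑' i, w i * a i ^ 2 := by rw [mul_pow, one_div, hsqrt, hsqrt]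

/-- `fract` is a translation on each interval `(k, k + 1)`. -/
lemma ae_fract_of_ae_restrict_Ioo {Q : ℝ → Prop}
    (h : ∀ᵐ s ∂(volume.restrict (Set.Ioo (0 : ℝ) 1)), Q s) :
    ∀ᵐ u : ℝ, Int.fract u ≠ 0 ∧ Q (Int.fract u) := by
  rw [ae_restrict_iff' measurableSet_Ioo] at h
  have hshift : ∀ᵐ u : ℝ, ∀ k : ℤ, u - k ∈ Set.Ioo (0 : ℝ) 1 → Q (u - k) := ae_all_iff.mpr
    fun k => (measurePreserving_sub_right volume (k : ℝ)).quasiMeasurePreserving.ae h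
  filter_upwards [hshift, (Set.countable_range ((↑) : ℤ → ℝ)).ae_notMem volume] with u hu hint
  have hfr : Int.fract u ≠ 0 := fun h0 => hint (Int.fract_eq_zero_iff.mp h0)
  have hmem : Int.fract u ∈ Set.Ioo (0 : ℝ) 1 :=
    ⟨(Int.fract_nonneg u).lt_of_ne' hfr, Int.fract_lt_one u⟩
  rw [← Int.self_sub_floor] at hmem ⊢
  exact ⟨hfr, hu ⌊u⌋ hmem⟩

namespace Network

variable {V : Type} [Countable V] [MeasurableSpace V] [DiscreteMeasurableSpace V]

lemma c_nonneg (N : Network V) (x y : V) : 0 ≤ N.c x y := by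
  by_cases h : N.adj x y
  · exact (N.c_pos x y h).le
  · exact (N.c_eq_zero x y h).ge

lemma tsum_ofReal_c (N : Network V) (y : V) :
    ∑' v, ENNReal.ofReal (N.c y v) = ENNReal.ofReal (N.m0 y) :=
  (ENNReal.ofReal_tsum_of_nonneg (N.c_nonneg y) (N.c_summable y)).symm

lemma summable_c_complex (N : Network V) (y : V) : Summable fun v => (N.c y v : ℂ) :=
  Complex.ofRealCLM.summable (N.c_summable y)

lemma enorm_c_mul (N : Network V) (x y : V) (z : ℂ) :
    ‖(N.c x y : ℂ) * z‖ₑ = ENNReal.ofReal (N.c x y) * ‖z‖ₑ := by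
  rw [enorm_mul, Complex.enorm_ofReal_of_nonneg (N.c_nonneg x y)]

def mean (N : Network V) (y : V) (H : V → ℂ) : ℂ :=
  (N.m0 y : ℂ)⁻¹ * ∑' v, (N.c y v : ℂ) * H v

lemma mean_congr (N : Network V) {y : V} {H K : V → ℂ} (h : ∀ v, N.c y v ≠ 0 → H v = K v) :
    N.mean y H = N.mean y K := by
  unfold mean
  congr 1
  refine tsum_congr fun v => ?_
  rcases eq_or_ne (N.c y v) 0 with hv | hv
  · simp [hv]
  · rw [h v hv]

lemma mean_add (N : Network V) {y : V} {H K : V → ℂ}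
    (hH : Summable fun v => (N.c y v : ℂ) * H v) (hK : Summable fun v => (N.c y v : ℂ) * K v) :
    N.mean y (fun v => H v + K v) = N.mean y H + N.mean y K := by
  simp only [mean, mul_add, hH.tsum_add hK]

lemma mean_div (N : Network V) (y : V) (H : V → ℂ) (a : ℂ) :
    N.mean y (fun v => H v / a) = N.mean y H / a := by
  simp only [mean, ← mul_div_assoc, tsum_div_const]

lemma mean_eq_midpoint (N : Network V) {y : V} {H K L : V → ℂ}
    (h : ∀ v, N.c y v ≠ 0 → H v = (K v + L v) / 2)
    (hK : Summable fun v => (N.c y v : ℂ) * K v) (hL : Summable fun v => (N.c y v : ℂ) * L v) :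
    N.mean y H = (N.mean y K + N.mean y L) / 2 := by
  rw [N.mean_congr h, mean_div, mean_add _ hK hL]

/-- No summability hypothesis is needed: `H` and its reflection are summable against `c y`
simultaneously, and otherwise both `tsum`s are `0`. -/
lemma mean_two_mul_mean_sub (N : Network V) (y : V) (H : V → ℂ) :
    N.mean y (fun v => 2 * N.mean y H - H v) = N.mean y H := by
  set M := N.mean y H with hM
  rcases eq_or_ne (N.m0 y) 0 with hm | hm
  · simp [M, mean, hm]
  have hm' : (N.m0 y : ℂ) ≠ 0 := by exact_mod_cast hm
  have hc : Summable fun v => (N.c y v : ℂ) * (2 * M) := (N.summable_c_complex y).mul_right _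
  by_cases hH : Summable fun v => (N.c y v : ℂ) * H v
  · have hsum : ∑' v, (N.c y v : ℂ) = N.m0 y := (Complex.ofReal_tsum _).symm
    have hS : ∑' v, (N.c y v : ℂ) * H v = N.m0 y * M := by
      rw [hM, mean, ← mul_assoc, mul_inv_cancel₀ hm', one_mul]
    rw [mean]
    simp only [mul_sub]
    rw [hc.tsum_sub hH, tsum_mul_right, hsum, hS]
    field_simp
    ring
  · have hH' : ¬ Summable fun v => (N.c y v : ℂ) * (2 * M - H v) := fun h =>
      hH (by simpa [mul_sub] using hc.sub h)
    rw [mean, tsum_eq_zero_of_not_summable hH', hM, mean, tsum_eq_zero_of_not_summable hH]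

lemma ofReal_m0_mul_enorm_mean_sq_le (N : Network V) (y : V) (H : V → ℂ) :
    ENNReal.ofReal (N.m0 y) * ‖N.mean y H‖ₑ ^ 2
      ≤ ∑' v, ENNReal.ofReal (N.c y v) * ‖H v‖ₑ ^ 2 := by
  set T := ∑' v, ENNReal.ofReal (N.c y v) * ‖H v‖ₑ ^ 2
  have hm : 0 ≤ N.m0 y := tsum_nonneg (N.c_nonneg y)
  have hsum : ‖∑' v, (N.c y v : ℂ) * H v‖ₑ ^ 2 ≤ ENNReal.ofReal (N.m0 y) * T := by
    have hcs := ENNReal.sq_tsum_mul_le (fun v => ENNReal.ofReal (N.c y v)) (fun v => ‖H v‖ₑ)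
    rw [N.tsum_ofReal_c] at hcs
    grw [enorm_tsum_le_tsum_enorm, ← hcs]
    simp only [N.enorm_c_mul, le_refl]
  have hunit : ENNReal.ofReal (N.m0 y) * ENNReal.ofReal (N.m0 y)⁻¹ ≤ 1 := by
    rw [← ENNReal.ofReal_mul hm, ← ENNReal.ofReal_one]
    exact ENNReal.ofReal_le_ofReal (mul_inv_le_one_of_le₀ le_rfl hm)
  calc ENNReal.ofReal (N.m0 y) * ‖N.mean y H‖ₑ ^ 2
      ≤ ENNReal.ofReal (N.m0 y)
          * (ENNReal.ofReal (N.m0 y)⁻¹ ^ 2 * (ENNReal.ofReal (N.m0 y) * T)) := by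
        rw [mean, enorm_mul, ← Complex.ofReal_inv,
          Complex.enorm_ofReal_of_nonneg (inv_nonneg.mpr hm), mul_pow]
        gcongr
    _ = (ENNReal.ofReal (N.m0 y) * ENNReal.ofReal (N.m0 y)⁻¹) ^ 2 * T := by ring
    _ ≤ T := by grw [hunit, one_pow, one_mul]

/-- The recursion of the d'Alembert extension, `F̃(·, t + 1)` in terms of `F̃(·, t)`. -/
def stepFwd (N : Network V) (G : V → V → ℂ) : V → V → ℂ :=
  fun x y => 2 * N.mean y (G y) - G y x

/-- The recursion of the d'Alembert extension, `F̃(·, t - 1)` in terms of `F̃(·, t)`. -/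
def stepBwd (N : Network V) (G : V → V → ℂ) : V → V → ℂ :=
  fun x y => 2 * N.mean x (fun u => G u x) - G y x

lemma stepFwd_stepBwd (N : Network V) (G : V → V → ℂ) : N.stepFwd (N.stepBwd G) = G := by
  funext x y
  simp only [stepFwd]
  unfold stepBwd
  rw [mean_two_mul_mean_sub]
  ring

lemma stepBwd_stepFwd (N : Network V) (G : V → V → ℂ) : N.stepBwd (N.stepFwd G) = G := by
  funext x y
  simp only [stepBwd]
  unfold stepFwd
  rw [mean_two_mul_mean_sub]
  ring

def stepEquiv (N : Network V) : Equiv.Perm (V → V → ℂ) :=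
  ⟨N.stepFwd, N.stepBwd, N.stepBwd_stepFwd, N.stepFwd_stepBwd⟩

lemma fwdExt_eq_pow (N : Network V) (f : V → V → ℝ → ℂ) (s : ℝ) (n : ℕ) :
    (fun x y => N.fwdExt f n x y s) = (N.stepEquiv ^ n) (fun x y => f x y s) := by
  induction n with
  | zero => rfl
  | succ n ih =>
    rw [pow_succ', Equiv.Perm.mul_apply, ← ih]
    funext x y
    simp only [fwdExt, stepEquiv, Equiv.coe_fn_mk, stepFwd, mean, div_eq_mul_inv, mul_assoc]

lemma bwdExt_eq_pow (N : Network V) (f : V → V → ℝ → ℂ) (s : ℝ) (n : ℕ) :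
    (fun x y => N.bwdExt f n x y s) = (N.stepEquiv⁻¹ ^ n) (fun x y => f x y s) := by
  induction n with
  | zero => rfl
  | succ n ih =>
    rw [pow_succ', Equiv.Perm.mul_apply, ← ih]
    funext x y
    simp only [bwdExt, stepEquiv, Equiv.Perm.inv_def, Equiv.coe_fn_symm_mk, stepBwd, mean,
      div_eq_mul_inv, mul_assoc]

lemma tilde_eq_zpow (N : Network V) (f : V → V → ℝ → ℂ) {u : ℝ} (hu : Int.fract u ≠ 0) :
    (fun x y => N.tilde f x y u) = (N.stepEquiv ^ ⌊u⌋) (fun x y => f x y (Int.fract u)) := by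
  have hint : u ∉ Set.range Int.cast := fun h => hu (Int.fract_eq_zero_iff.mpr h)
  by_cases h01 : 0 ≤ u ∧ u ≤ 1
  · have hlt : u < 1 := h01.2.lt_of_ne (by rintro rfl; exact hint ⟨1, by simp⟩)
    rw [Int.floor_eq_zero_iff.mpr ⟨h01.1, hlt⟩, zpow_zero, Int.fract_eq_self.mpr ⟨h01.1, hlt⟩]
    funext x y
    simp [tilde, h01]
  by_cases h1 : 1 < u
  · have hceil : ⌈u⌉ - 1 = ⌊u⌋ := by
      rw [(Int.ceil_eq_floor_add_one_iff_notMem u).mpr hint, add_sub_cancel_right]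
    have hfl : 0 ≤ ⌊u⌋ := Int.floor_nonneg.mpr (by linarith)
    rw [← Int.toNat_of_nonneg hfl, zpow_natCast, ← fwdExt_eq_pow]
    funext x y
    simp only [tilde, h01, h1, if_false, if_true, hceil, Int.self_sub_floor]
  · have hneg : u < 0 := by
      by_contra h
      exact h01 ⟨not_lt.mp h, not_lt.mp h1⟩
    obtain ⟨n, hn⟩ : ∃ n : ℕ, (n : ℤ) = -⌊u⌋ := ⟨(-⌊u⌋).toNat, Int.toNat_of_nonneg
      (by linarith [Int.floor_lt.mpr (show u < ((0 : ℤ) : ℝ) by simpa using hneg)])⟩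
    rw [show ⌊u⌋ = -(n : ℤ) by omega, zpow_neg, zpow_natCast, ← inv_pow, ← bwdExt_eq_pow]
    funext x y
    simp only [tilde, h01, h1, if_false, ← hn, Int.toNat_natCast]
    congr 1
    rw [hn, Int.fract]
    push_cast
    ring

lemma tilde_add_one (N : Network V) (f : V → V → ℝ → ℂ) {u : ℝ} (hu : Int.fract u ≠ 0) :
    (fun x y => N.tilde f x y (u + 1)) = N.stepFwd (fun x y => N.tilde f x y u) := by
  rw [N.tilde_eq_zpow f (by rwa [Int.fract_add_one]), N.tilde_eq_zpow f hu, Int.floor_add_one,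
    Int.fract_add_one, add_comm, zpow_one_add]
  rfl

lemma tilde_sub_one (N : Network V) (f : V → V → ℝ → ℂ) {u : ℝ} (hu : Int.fract u ≠ 0) :
    (fun x y => N.tilde f x y (u - 1)) = N.stepBwd (fun x y => N.tilde f x y u) := by
  rw [N.tilde_eq_zpow f (by rwa [Int.fract_sub_one]), N.tilde_eq_zpow f hu, Int.floor_sub_one,
    Int.fract_sub_one, sub_eq_neg_add, zpow_add, zpow_neg_one]
  rfl

def edgeNormSq (N : Network V) (G : V → V → ℂ) : ℝ≥0∞ :=
  ∑' x, ∑' y, ENNReal.ofReal (N.c x y) * ‖G x y‖ₑ ^ 2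

lemma edgeNormSq_transpose (N : Network V) (G : V → V → ℂ) :
    N.edgeNormSq (fun x y => G y x) = N.edgeNormSq G := by
  rw [edgeNormSq, ENNReal.tsum_comm]
  simp only [N.c_symm]
  rfl

lemma edgeNormSq_congr (N : Network V) {G H : V → V → ℂ}
    (h : ∀ a b, N.c a b ≠ 0 → G a b = H a b) : N.edgeNormSq G = N.edgeNormSq H := by
  refine tsum_congr fun a => tsum_congr fun b => ?_
  rcases eq_or_ne (N.c a b) 0 with hab | hab
  · simp [hab]
  · rw [h a b hab]

lemma summable_c_mul_of_edgeNormSq_ne_top (N : Network V) {G : V → V → ℂ}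
    (hG : N.edgeNormSq G ≠ ⊤) (y : V) : Summable fun v => (N.c y v : ℂ) * G y v := by
  refine Summable.of_enorm (ne_top_of_le_ne_top (b := ENNReal.ofReal (N.m0 y) + N.edgeNormSq G)
    (by finiteness) ?_)
  have hle : ∀ a : ℝ≥0∞, a ≤ 1 + a ^ 2 := fun a => by
    rcases le_total a 1 with h | h
    · exact le_add_right h
    · exact le_add_left (by simpa [sq] using mul_le_mul_right h a)
  calc ∑' v, ‖(N.c y v : ℂ) * G y v‖ₑ
      ≤ ∑' v, ENNReal.ofReal (N.c y v) * (1 + ‖G y v‖ₑ ^ 2) := by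
        simp only [N.enorm_c_mul]
        gcongr with v
        exact hle _
    _ = ENNReal.ofReal (N.m0 y) + ∑' v, ENNReal.ofReal (N.c y v) * ‖G y v‖ₑ ^ 2 := by
        simp only [mul_add, mul_one, ENNReal.tsum_add, N.tsum_ofReal_c]
    _ ≤ ENNReal.ofReal (N.m0 y) + N.edgeNormSq G := by
        gcongr
        exact ENNReal.le_tsum (f := fun x => ∑' v, ENNReal.ofReal (N.c x v) * ‖G x v‖ₑ ^ 2) y

lemma summable_c_mul_swap_of_edgeNormSq_ne_top (N : Network V) {G : V → V → ℂ}
    (hG : N.edgeNormSq G ≠ ⊤) (x : V) : Summable fun u => (N.c x u : ℂ) * G u x :=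
  N.summable_c_mul_of_edgeNormSq_ne_top (G := fun a b => G b a)
    (by rwa [edgeNormSq_transpose]) x

lemma edgeNormSq_stepFwd_le (N : Network V) (G : V → V → ℂ) :
    N.edgeNormSq (N.stepFwd G) ≤ 10 * N.edgeNormSq G := by
  have hpt : ∀ x y, ‖N.stepFwd G x y‖ₑ ^ 2 ≤ 8 * ‖N.mean y (G y)‖ₑ ^ 2 + 2 * ‖G y x‖ₑ ^ 2 := by
    intro x y
    have h := ENNReal.rpow_add_le_mul_rpow_add_rpow (2 * ‖N.mean y (G y)‖ₑ) ‖G y x‖ₑ one_le_two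
    norm_num [ENNReal.rpow_two, mul_pow] at h
    calc ‖N.stepFwd G x y‖ₑ ^ 2 ≤ (2 * ‖N.mean y (G y)‖ₑ + ‖G y x‖ₑ) ^ 2 := by
          gcongr
          refine (enorm_sub_le).trans ?_
          rw [enorm_mul]
          norm_num [enorm_eq_nnnorm]
      _ ≤ 8 * ‖N.mean y (G y)‖ₑ ^ 2 + 2 * ‖G y x‖ₑ ^ 2 := by
          refine h.trans (le_of_eq ?_)
          ring
  have hm0 : ∀ y, ∑' x, ENNReal.ofReal (N.c x y) = ENNReal.ofReal (N.m0 y) := fun y => by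
    simp only [N.c_symm _ y, N.tsum_ofReal_c]
  calc N.edgeNormSq (N.stepFwd G)
      ≤ ∑' x, ∑' y, ENNReal.ofReal (N.c x y) *
          (8 * ‖N.mean y (G y)‖ₑ ^ 2 + 2 * ‖G y x‖ₑ ^ 2) := by
        unfold edgeNormSq
        gcongr with x y
        exact hpt x y
    _ = 8 * ∑' y, ENNReal.ofReal (N.m0 y) * ‖N.mean y (G y)‖ₑ ^ 2
          + 2 * N.edgeNormSq (fun x y => G y x) := by
        simp only [mul_add, ENNReal.tsum_add, edgeNormSq]
        rw [ENNReal.tsum_comm]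
        simp only [mul_left_comm (ENNReal.ofReal _), ENNReal.tsum_mul_left, ENNReal.tsum_mul_right,
          hm0]
    _ ≤ 8 * N.edgeNormSq G + 2 * N.edgeNormSq G := by
        rw [edgeNormSq_transpose]
        gcongr
        exact ENNReal.tsum_le_tsum fun y => N.ofReal_m0_mul_enorm_mean_sq_le y (G y)
    _ = 10 * N.edgeNormSq G := by ring

lemma edgeNormSq_stepBwd_le (N : Network V) (G : V → V → ℂ) :
    N.edgeNormSq (N.stepBwd G) ≤ 10 * N.edgeNormSq G := by
  calc N.edgeNormSq (N.stepBwd G) = N.edgeNormSq (N.stepFwd fun a b => G b a) :=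
        N.edgeNormSq_transpose _
    _ ≤ 10 * N.edgeNormSq (fun a b => G b a) := N.edgeNormSq_stepFwd_le _
    _ = 10 * N.edgeNormSq G := by rw [edgeNormSq_transpose]

lemma edgeNormSq_zpow_ne_top (N : Network V) {G : V → V → ℂ} (hG : N.edgeNormSq G ≠ ⊤)
    (k : ℤ) : N.edgeNormSq ((N.stepEquiv ^ k) G) ≠ ⊤ := by
  induction k using Int.induction_on with
  | zero => simpa using hG
  | succ k ih =>
    rw [add_comm, zpow_one_add, Equiv.Perm.mul_apply]
    exact ne_top_of_le_ne_top (by finiteness) (N.edgeNormSq_stepFwd_le _)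
  | pred k ih =>
    rw [sub_eq_neg_add, zpow_add, zpow_neg_one, Equiv.Perm.mul_apply]
    exact ne_top_of_le_ne_top (by finiteness) (N.edgeNormSq_stepBwd_le _)

lemma stepFwd_eq_midpoint (N : Network V) {G A B : V → V → ℂ}
    (hG : ∀ a b, N.c a b ≠ 0 → G a b = (A a b + B a b) / 2)
    (hA : N.edgeNormSq A ≠ ⊤) (hB : N.edgeNormSq B ≠ ⊤) {x y : V} (hxy : N.c x y ≠ 0) :
    N.stepFwd G x y = (N.stepFwd A x y + N.stepFwd B x y) / 2 := by
  simp only [stepFwd]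
  rw [N.mean_eq_midpoint (hG y) (N.summable_c_mul_of_edgeNormSq_ne_top hA y)
    (N.summable_c_mul_of_edgeNormSq_ne_top hB y), hG y x (by rwa [N.c_symm])]
  ring

lemma stepBwd_eq_midpoint (N : Network V) {G A B : V → V → ℂ}
    (hG : ∀ a b, N.c a b ≠ 0 → G a b = (A a b + B a b) / 2)
    (hA : N.edgeNormSq A ≠ ⊤) (hB : N.edgeNormSq B ≠ ⊤) {x y : V} (hxy : N.c x y ≠ 0) :
    N.stepBwd G x y = (N.stepBwd A x y + N.stepBwd B x y) / 2 := by
  simp only [stepBwd]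
  rw [N.mean_eq_midpoint (fun u hu => hG u x (by rwa [N.c_symm]))
    (N.summable_c_mul_swap_of_edgeNormSq_ne_top hA x)
    (N.summable_c_mul_swap_of_edgeNormSq_ne_top hB x), hG y x (by rwa [N.c_symm])]
  ring

/-- The times `u` at which the recursion for `F̃(·, u ± 1)` may be expanded termwise. -/
def IsRegularTime (N : Network V) (f : V → V → ℝ → ℂ) (u : ℝ) : Prop :=
  Int.fract u ≠ 0 ∧ N.edgeNormSq (fun a b => N.tilde f a b u) ≠ ⊤

lemma dAlembertFun_add_one_add_sub_one (N : Network V) {f g : V → V → ℝ → ℂ} {τ t : ℝ}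
    {x y : V} (hxy : N.c x y ≠ 0) (ht : t ∈ Set.Ioo 0 1)
    (hg : ∀ a b, N.c a b ≠ 0 → g a b t = N.dAlembertFun f τ a b t)
    (h₁ : N.IsRegularTime f (t + τ)) (h₂ : N.IsRegularTime f (t - τ)) :
    N.dAlembertFun f (τ + 1) x y t + N.dAlembertFun f (τ - 1) x y t
      = 2 * N.dAlembertFun g 1 x y t := by
  have hfr : Int.fract t ≠ 0 := by rw [Int.fract_eq_self.mpr ⟨ht.1.le, ht.2⟩]; exact ht.1.ne'
  have hgt : (fun a b => N.tilde g a b t) = fun a b => g a b t := by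
    funext a b
    simp [tilde, ht.1.le, ht.2.le]
  have hfwd := N.tilde_add_one g hfr
  have hbwd := N.tilde_sub_one g hfr
  rw [hgt] at hfwd hbwd
  simp only [dAlembertFun, show t + (τ + 1) = t + τ + 1 by ring,
    show t - (τ + 1) = t - τ - 1 by ring, show t + (τ - 1) = t + τ - 1 by ring,
    show t - (τ - 1) = t - τ + 1 by ring, congrFun₂ hfwd x y, congrFun₂ hbwd x y,
    congrFun₂ (N.tilde_add_one f h₁.1) x y, congrFun₂ (N.tilde_sub_one f h₁.1) x y,
    congrFun₂ (N.tilde_add_one f h₂.1) x y, congrFun₂ (N.tilde_sub_one f h₂.1) x y,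
    N.stepFwd_eq_midpoint hg h₁.2 h₂.2 hxy, N.stepBwd_eq_midpoint hg h₁.2 h₂.2 hxy]
  ring

lemma ae_edgeMeasure_iff (N : Network V) {Q : (V × V) × ℝ → Prop} :
    (∀ᵐ p ∂N.edgeMeasure, Q p) ↔
      ∀ e : V × V, N.c e.1 e.2 ≠ 0 → ∀ᵐ t ∂(volume.restrict (Set.Ioo (0 : ℝ) 1)), Q (e, t) := by
  rw [edgeMeasure, Measure.ae_sum_iff]
  refine forall_congr' fun e => ?_
  rw [(measurableEmbedding_prodMk_left e).ae_map_iff]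
  rcases eq_or_ne (N.c e.1 e.2) 0 with he | he
  · simp [he]
  · have hpos : ENNReal.ofReal (N.c e.1 e.2 / 2) ≠ 0 := by
      simpa using (N.c_nonneg e.1 e.2).lt_of_ne' he
    rw [Measure.ae_ennreal_smul_measure_iff hpos]
    exact ⟨fun h _ => h, fun h => h he⟩

lemma ae_forall_of_ae_edgeMeasure (N : Network V) {Q : (V × V) × ℝ → Prop}
    (h : ∀ᵐ p ∂N.edgeMeasure, Q p) :
    ∀ᵐ t ∂(volume.restrict (Set.Ioo (0 : ℝ) 1)), ∀ e : V × V, N.c e.1 e.2 ≠ 0 → Q (e, t) := by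
  refine ae_all_iff.mpr fun e => ?_
  rcases eq_or_ne (N.c e.1 e.2) 0 with he | he
  · exact .of_forall fun _ h => absurd he h
  · filter_upwards [N.ae_edgeMeasure_iff.mp h e he] with t ht using fun _ => ht

lemma ae_edgeMeasure_of_ae_restrict (N : Network V) {P : ℝ → Prop}
    (h : ∀ᵐ t ∂(volume.restrict (Set.Ioo (0 : ℝ) 1)), P t) :
    ∀ᵐ p ∂N.edgeMeasure, N.c p.1.1 p.1.2 ≠ 0 ∧ p.2 ∈ Set.Ioo 0 1 ∧ P p.2 :=
  N.ae_edgeMeasure_iff.mpr fun e he => by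
    filter_upwards [ae_restrict_mem measurableSet_Ioo, h] with t ht hP using ⟨he, ht, hP⟩

lemma lintegral_edgeMeasure (N : Network V) {g : (V × V) × ℝ → ℝ≥0∞} (hg : Measurable g) :
    ∫⁻ p, g p ∂N.edgeMeasure
      = ∑' e : V × V, ENNReal.ofReal (N.c e.1 e.2 / 2) * ∫⁻ t in Set.Ioo 0 1, g (e, t) := by
  simp only [edgeMeasure, lintegral_sum_measure, lintegral_map hg measurable_prodMk_left,
    lintegral_smul_measure, smul_eq_mul]

lemma lintegral_edgeNormSq (N : Network V) {φ : (V × V) × ℝ → ℂ} (hφ : Measurable φ) :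
    ∫⁻ t in Set.Ioo 0 1, N.edgeNormSq (fun a b => φ ((a, b), t))
      = 2 * ∫⁻ p, ‖φ p‖ₑ ^ 2 ∂N.edgeMeasure := by
  have hslice : ∀ e : V × V, Measurable fun t => ‖φ (e, t)‖ₑ ^ 2 :=
    fun e => ((hφ.comp measurable_prodMk_left).enorm).pow_const 2
  have hc : ∀ e : V × V, ENNReal.ofReal (N.c e.1 e.2) = 2 * ENNReal.ofReal (N.c e.1 e.2 / 2) :=
    fun e => by rw [← ENNReal.ofReal_ofNat, ← ENNReal.ofReal_mul zero_le_two]; ring_nf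
  rw [N.lintegral_edgeMeasure ((hφ.enorm).pow_const 2), ← ENNReal.tsum_mul_left]
  simp only [edgeNormSq, ← ENNReal.tsum_prod (f := fun a b => ENNReal.ofReal (N.c a b) * _)]
  rw [lintegral_tsum fun e => ((hslice e).const_mul _).aemeasurable]
  refine tsum_congr fun e => ?_
  rw [lintegral_const_mul _ (hslice e), hc, mul_assoc]

lemma ae_edgeNormSq_ne_top (N : Network V) (F : Lp ℂ 2 N.edgeMeasure) :
    ∀ᵐ t ∂(volume.restrict (Set.Ioo (0 : ℝ) 1)), N.edgeNormSq (fun a b => F ((a, b), t)) ≠ ⊤ := by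
  obtain ⟨φ, hφ, hFφ⟩ := Lp.aestronglyMeasurable F
  have hfin : ∫⁻ t in Set.Ioo 0 1, N.edgeNormSq (fun a b => φ ((a, b), t)) ≠ ⊤ := by
    have hF := lintegral_rpow_enorm_lt_top_of_eLpNorm_lt_top two_ne_zero ENNReal.ofNat_ne_top
      (Lp.eLpNorm_lt_top F)
    have hφF : ∫⁻ p, ‖φ p‖ₑ ^ 2 ∂N.edgeMeasure = ∫⁻ p, ‖F p‖ₑ ^ 2 ∂N.edgeMeasure :=
      lintegral_congr_ae (hFφ.mono fun p hp => by simp only [hp])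
    rw [N.lintegral_edgeNormSq hφ.measurable, hφF]
    simpa [ENNReal.rpow_two, ENNReal.mul_eq_top] using hF.ne
  have hmeas : Measurable fun t => N.edgeNormSq (fun a b => φ ((a, b), t)) := by
    unfold edgeNormSq
    fun_prop (disch := exact hφ.measurable)
  filter_upwards [ae_lt_top hmeas hfin, N.ae_forall_of_ae_edgeMeasure hFφ] with t ht hFt
  rw [N.edgeNormSq_congr fun a b hab => hFt (a, b) hab]
  exact ht.ne

lemma ae_isRegularTime (N : Network V) (F : Lp ℂ 2 N.edgeMeasure) :
    ∀ᵐ u : ℝ, N.IsRegularTime (N.edgeFun F) u := by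
  filter_upwards [ae_fract_of_ae_restrict_Ioo (N.ae_edgeNormSq_ne_top F)] with u ⟨hu, hF⟩
  exact ⟨hu, by rw [N.tilde_eq_zpow _ hu]; exact N.edgeNormSq_zpow_ne_top hF _⟩

end Network

/-- For every `τ ∈ ℝ` the d'Alembert operators satisfy
`C(τ+1) + C(τ-1) = 2·C(1)·C(τ)` as bounded operators on `L²(X¹,m¹)`.  Here
`C : ℝ → B(L²(X¹,m¹))` is the family of (bounded) d'Alembert operators, characterized by
`(C(τ)F)(xy,t) = (F̃(xy,t+τ) + F̃(xy,t-τ))/2` almost everywhere. -/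
theorem dAlembert_cosine_functional_equation
    {V : Type} [Countable V] [MeasurableSpace V] [DiscreteMeasurableSpace V]
    (N : Network V)
    (C : ℝ → (N.L2X →L[ℂ] N.L2X))
    (hC : ∀ σ : ℝ, ∀ F : N.L2X,
      ⇑(C σ F : Lp ℂ 2 N.edgeMeasure) =ᵐ[N.edgeMeasure]
        fun p => N.dAlembertFun (N.edgeFun (F : Lp ℂ 2 N.edgeMeasure)) σ p.1.1 p.1.2 p.2)
    (τ : ℝ) :
    C (τ + 1) + C (τ - 1) = (2:ℂ) • ((C 1).comp (C τ)) := by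
  ext1 F
  refine Subtype.ext (Lp.ext ?_)
  set f := N.edgeFun (F : Lp ℂ 2 N.edgeMeasure)
  have hreg : ∀ᵐ t : ℝ, N.IsRegularTime f (t + τ) ∧ N.IsRegularTime f (t - τ) :=
    ((measurePreserving_add_right volume τ).quasiMeasurePreserving.ae (N.ae_isRegularTime F)).and
      ((measurePreserving_sub_right volume τ).quasiMeasurePreserving.ae (N.ae_isRegularTime F))
  have hgood := N.ae_edgeMeasure_of_ae_restrict
    ((N.ae_forall_of_ae_edgeMeasure (hC τ F)).and (ae_restrict_of_ae hreg))
  filter_upwards [Lp.coeFn_add (C (τ + 1) F : Lp ℂ 2 N.edgeMeasure) (C (τ - 1) F),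
    Lp.coeFn_smul (2 : ℂ) (C 1 (C τ F) : Lp ℂ 2 N.edgeMeasure), hC (τ + 1) F, hC (τ - 1) F,
    hC 1 (C τ F), hgood] with p hadd hsmul hplus hminus hone ⟨hc, ht, hgt, h₁, h₂⟩
  simp only [add_apply, smul_apply, ContinuousLinearMap.comp_apply, Submodule.coe_add,
    Submodule.coe_smul, hadd, hsmul, Pi.add_apply, Pi.smul_apply, smul_eq_mul, hplus, hminus,
    hone]
  exact N.dAlembertFun_add_one_add_sub_one hc ht (fun a b hab => hgt (a, b) hab) h₁ h₂
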